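/- Let p : Γ → Λ be a covering of k-graphs and let v ∈ Γ^0. Then the map x ↦ p ∘ x is a bijection from vΓ^∞ onto p(v)Λ^∞; that is, every infinite path of Λ with range p(v) lifts uniquely to an infinite path of Γ with range v. -/

import Mathlib

open CategoryTheory

attribute [local instance 2000] Preorder.smallCategory

/-- A `k`-graph: a small category `Λ` equipped with a degree functor `d : Λ → ℕᵏ`
satisfying the unique factorisation property.  Morphisms point from the range of a path
to its source, so that `f ≫ g` corresponds to the composition `fg` of paths in the
`k`-graph literature (with `r (f ≫ g) = r f` and `s (f ≫ g) = s g`). -/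
structure KGraph (k : ℕ) (Λ : Type) [SmallCategory Λ] : Type where
  deg : ∀ {a b : Λ}, (a ⟶ b) → Fin k → ℕ
  deg_id : ∀ a : Λ, deg (𝟙 a) = 0
  deg_comp : ∀ {a b c : Λ} (f : a ⟶ b) (g : b ⟶ c), deg (f ≫ g) = deg f + deg g
  factor : ∀ {a b : Λ} (f : a ⟶ b) (m n : Fin k → ℕ), deg f = m + n →
    ∃! t : Σ c : Λ, (a ⟶ c) × (c ⟶ b),
      deg t.2.1 = m ∧ deg t.2.2 = n ∧ t.2.1 ≫ t.2.2 = f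

/-- An infinite path in a `k`-graph: a degree-preserving functor `Ω_k → Λ`, where `Ω_k`
is realised as the preorder category on `ℕᵏ = Fin k → ℕ`; the morphism `(p, q)` (for
`p ≤ q`) is `homOfLE h : p ⟶ q` and must be sent to a path of degree `q - p`.
The range of the path is `P.obj 0`. -/
structure InfPath {k : ℕ} {Λ : Type} [SmallCategory Λ] (KG : KGraph k Λ) : Type where
  P : (Fin k → ℕ) ⥤ Λ
  deg_eq : ∀ {p q : Fin k → ℕ} (h : p ≤ q), KG.deg (P.map (homOfLE h)) = q - p

/-- Translation by `n` on `ℕᵏ`, as a functor. -/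
def transFunctor (k : ℕ) (n : Fin k → ℕ) : (Fin k → ℕ) ⥤ (Fin k → ℕ) where
  obj p := p + n
  map f := homOfLE (add_le_add (leOfHom f) (le_refl n))
  map_id _ := rfl
  map_comp _ _ := rfl

/-- The shift `σⁿ x` of an infinite path `x`, satisfying `σⁿ x (p, q) = x (p + n, q + n)`. -/
def InfPath.shift {k : ℕ} {Λ : Type} [SmallCategory Λ] {KG : KGraph k Λ}
    (x : InfPath KG) (n : Fin k → ℕ) : InfPath KG where
  P := transFunctor k n ⋙ x.P
  deg_eq {p q} h := by
    have h1 : (transFunctor k n ⋙ x.P).map (homOfLE h)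
        = x.P.map (homOfLE (add_le_add h (le_refl n))) := rfl
    refine ((congrArg KG.deg h1).trans (x.deg_eq _)).trans ?_
    funext i
    simp only [Pi.sub_apply, Pi.add_apply]
    omega

/-- A covering of `k`-graphs: a degree-preserving functor `p : Γ → Λ` which is surjective
on paths and restricts to bijections `vΓ → p(v)Λ` and `Γv → Λp(v)` for every vertex `v`. -/
structure IsCovering {k : ℕ} {Γ Λ : Type} [SmallCategory Γ] [SmallCategory Λ]
    (KGΓ : KGraph k Γ) (KGΛ : KGraph k Λ) (p : Γ ⥤ Λ) : Prop where
  deg_map : ∀ {a b : Γ} (f : a ⟶ b), KGΛ.deg (p.map f) = KGΓ.deg f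
  surj : Function.Surjective
    (fun t : Σ (a b : Γ), a ⟶ b => (⟨p.obj t.1, p.obj t.2.1, p.map t.2.2⟩ : Σ (a b : Λ), a ⟶ b))
  bij_out : ∀ v : Γ, Function.Bijective
    (fun t : Σ b : Γ, (v ⟶ b) => (⟨p.obj t.1, p.map t.2⟩ : Σ b' : Λ, (p.obj v ⟶ b')))
  bij_in : ∀ v : Γ, Function.Bijective
    (fun t : Σ a : Γ, (a ⟶ v) => (⟨p.obj t.1, p.map t.2⟩ : Σ a' : Λ, (a' ⟶ p.obj v)))

/-- The image `p ∘ x` of an infinite path of `Γ` under a covering `p : Γ → Λ`. -/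
def InfPath.push {k : ℕ} {Γ Λ : Type} [SmallCategory Γ] [SmallCategory Λ]
    {KGΓ : KGraph k Γ} {KGΛ : KGraph k Λ} {p : Γ ⥤ Λ}
    (hc : IsCovering KGΓ KGΛ p) (x : InfPath KGΓ) : InfPath KGΛ where
  P := x.P ⋙ p
  deg_eq {a b} h := by
    have h1 : (x.P ⋙ p).map (homOfLE h) = p.map (x.P.map (homOfLE h)) := rfl
    rw [h1, hc.deg_map, x.deg_eq]

/-!
An infinite path `x` is determined by its initial segments `x(0, n)`, and conversely every
family `(λ_n)` of paths from a vertex `v`, with `d(λ_n) = n` and `λ_m` a prefix of `λ_n` for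
`m ≤ n`, is the family of initial segments of an infinite path with range `v`. A covering
restricts to a degree-preserving bijection `vΓ → p(v)Λ`, and by unique factorisation this
bijection preserves and reflects prefixes, so it matches such families in `Γ` and in `Λ`.
-/

/-- Morphisms bundled with their endpoints, so that morphisms whose endpoints agree only
propositionally can be compared with `=` instead of through `eqToHom`. -/
abbrev TotalHom (C : Type) [SmallCategory C] : Type := Σ a b : C, a ⟶ b

namespace TotalHom

variable {C D : Type} [SmallCategory C] [SmallCategory D]

def comp (t : TotalHom C) {c : C} (g : t.2.1 ⟶ c) : TotalHom C := ⟨t.1, c, t.2.2 ≫ g⟩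

def map (F : C ⥤ D) (t : TotalHom C) : TotalHom D := ⟨F.obj t.1, F.obj t.2.1, F.map t.2.2⟩

def IsPrefix (t u : TotalHom C) : Prop := ∃ (c : C) (g : t.2.1 ⟶ c), t.comp g = u

lemma mk_eq_mk_iff {a b : C} {f f' : a ⟶ b} :
    (⟨a, b, f⟩ : TotalHom C) = ⟨a, b, f'⟩ ↔ f = f' := by
  simp

lemma heq_of_eq {a b a' b' : C} {f : a ⟶ b} {f' : a' ⟶ b'}
    (h : (⟨a, b, f⟩ : TotalHom C) = ⟨a', b', f'⟩) : f ≍ f' := by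
  cases h; rfl

lemma comp_id (t : TotalHom C) : t.comp (𝟙 t.2.1) = t := by
  simp [comp]

lemma comp_eq_of_eq_id {t : TotalHom C} {a : C} (ht : t = ⟨a, a, 𝟙 a⟩) {c : C}
    (g : t.2.1 ⟶ c) : t.comp g = ⟨t.2.1, c, g⟩ := by
  subst ht
  simp [comp]

lemma comp_injective (t : TotalHom C) [Epi t.2.2] {c : C} {g g' : t.2.1 ⟶ c}
    (h : t.comp g = t.comp g') : g = g' :=
  (cancel_epi t.2.2).1 (by simpa [comp] using h)

lemma comp_comp_of_comp_eq {t u : TotalHom C} {g : t.2.1 ⟶ u.2.1} (h : t.comp g = u)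
    {d : C} (g' : u.2.1 ⟶ d) : t.comp (g ≫ g') = u.comp g' := by
  obtain ⟨a, b, f⟩ := t
  obtain ⟨a', b', f'⟩ := u
  obtain rfl : a = a' := congrArg Sigma.fst h
  have hfg : f ≫ g = f' := mk_eq_mk_iff.1 h
  dsimp only [comp] at g g' ⊢
  rw [← hfg, Category.assoc]

lemma eq_of_comp_eq {t u : TotalHom C} [Epi t.2.2] (h : t = u) {c c' : C}
    {g : t.2.1 ⟶ c} {g' : u.2.1 ⟶ c'} (hg : t.comp g = u.comp g') :
    (⟨t.2.1, c, g⟩ : TotalHom C) = ⟨u.2.1, c', g'⟩ := by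
  subst h
  obtain rfl : c = c' := congrArg (fun t => t.2.1) hg
  rw [comp_injective t hg]

namespace IsPrefix

lemma exists_hom {t u : TotalHom C} (h : t.IsPrefix u) :
    ∃ g : t.2.1 ⟶ u.2.1, t.comp g = u := by
  obtain ⟨c, g, rfl⟩ := h
  exact ⟨g, rfl⟩

noncomputable def hom {t u : TotalHom C} (h : t.IsPrefix u) : t.2.1 ⟶ u.2.1 :=
  h.exists_hom.choose

lemma comp_hom {t u : TotalHom C} (h : t.IsPrefix u) : t.comp h.hom = u :=
  h.exists_hom.choose_spec

lemma eq_hom {t u : TotalHom C} [Epi t.2.2] (h : t.IsPrefix u) {g : t.2.1 ⟶ u.2.1}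
    (hg : t.comp g = u) : g = h.hom :=
  comp_injective t (hg.trans h.comp_hom.symm)

lemma fst_eq {t u : TotalHom C} (h : t.IsPrefix u) : t.1 = u.1 := by
  obtain ⟨c, g, rfl⟩ := h
  rfl

lemma map {t u : TotalHom C} (h : t.IsPrefix u) (F : C ⥤ D) :
    (t.map F).IsPrefix (u.map F) := by
  obtain ⟨c, g, rfl⟩ := h
  exact ⟨F.obj c, F.map g, by simp [comp, TotalHom.map]⟩

end IsPrefix

end TotalHom

namespace KGraph

open TotalHom

variable {k : ℕ} {C : Type} [SmallCategory C]

lemma epi (KG : KGraph k C) {a b : C} (f : a ⟶ b) : Epi f := by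
  refine ⟨fun g g' h => ?_⟩
  obtain ⟨t, -, ht⟩ := KG.factor (f ≫ g) (KG.deg f) (KG.deg g) (KG.deg_comp f g)
  have hg : KG.deg g' = KG.deg g := add_left_cancel (by rw [← KG.deg_comp, ← KG.deg_comp, h])
  simpa using (ht ⟨b, f, g⟩ ⟨rfl, rfl, rfl⟩).trans (ht ⟨b, f, g'⟩ ⟨rfl, hg, h.symm⟩).symm

variable (KG : KGraph k C)

lemma prefix_eq_of_comp_eq {a b b' c : C} {f : a ⟶ b} {g : b ⟶ c} {f' : a ⟶ b'}
    {g' : b' ⟶ c} (h : f ≫ g = f' ≫ g') (hf : KG.deg f = KG.deg f') :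
    (⟨a, b, f⟩ : TotalHom C) = ⟨a, b', f'⟩ := by
  obtain ⟨t, -, ht⟩ := KG.factor (f ≫ g) (KG.deg f) (KG.deg g) (KG.deg_comp f g)
  have hg : KG.deg g' = KG.deg g :=
    add_left_cancel (a := KG.deg f') (by rw [← KG.deg_comp, ← hf, ← KG.deg_comp, h])
  have := (ht ⟨b, f, g⟩ ⟨rfl, rfl, rfl⟩).trans (ht ⟨b', f', g'⟩ ⟨hf.symm, hg, h.symm⟩).symm
  exact congrArg (fun t : Σ d, (a ⟶ d) × (d ⟶ c) => (⟨a, t.1, t.2.1⟩ : TotalHom C)) this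

lemma eq_id_of_deg_eq_zero {t : TotalHom C} (h : KG.deg t.2.2 = 0) : t = ⟨t.1, t.1, 𝟙 t.1⟩ :=
  KG.prefix_eq_of_comp_eq (g := 𝟙 _) (g' := t.2.2) (by simp) (by rw [h, KG.deg_id])

lemma exists_isPrefix (u : TotalHom C) {m n : Fin k → ℕ} (h : KG.deg u.2.2 = m + n) :
    ∃ t : TotalHom C, KG.deg t.2.2 = m ∧ t.IsPrefix u := by
  obtain ⟨⟨c, f, g⟩, ⟨hf, -, hfg⟩, -⟩ := KG.factor u.2.2 m n h
  exact ⟨⟨u.1, c, f⟩, hf, u.2.1, g, by simp only [comp, hfg]⟩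

lemma isPrefix_unique {t t' u : TotalHom C} (ht : t.IsPrefix u) (ht' : t'.IsPrefix u)
    (hd : KG.deg t.2.2 = KG.deg t'.2.2) : t = t' := by
  obtain ⟨c, g, rfl⟩ := ht
  obtain ⟨c', g', h⟩ := ht'
  obtain ⟨a', b', f'⟩ := t'
  obtain rfl : a' = t.1 := congrArg Sigma.fst h
  obtain rfl : c' = c := congrArg (fun t => t.2.1) h
  exact KG.prefix_eq_of_comp_eq (mk_eq_mk_iff.1 h).symm hd

end KGraph

namespace InfPath

open TotalHom

variable {k : ℕ} {C : Type} [SmallCategory C] {KG : KGraph k C}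

def seg (x : InfPath KG) (n : Fin k → ℕ) : TotalHom C :=
  ⟨x.P.obj 0, x.P.obj n, x.P.map (homOfLE (zero_le : 0 ≤ n))⟩

lemma deg_seg (x : InfPath KG) (n : Fin k → ℕ) : KG.deg (x.seg n).2.2 = n := by
  simp [seg, x.deg_eq]

lemma seg_comp (x : InfPath KG) {m n : Fin k → ℕ} (f : m ⟶ n) :
    (x.seg m).comp (x.P.map f) = x.seg n := by
  simp only [seg, comp, ← Functor.map_comp]
  rfl

lemma isPrefix_seg (x : InfPath KG) {m n : Fin k → ℕ} (h : m ≤ n) :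
    (x.seg m).IsPrefix (x.seg n) :=
  ⟨_, _, x.seg_comp (homOfLE h)⟩

lemma ext_of_seg {x y : InfPath KG} (h : ∀ n, x.seg n = y.seg n) : x = y := by
  have hP : x.P = y.P := by
    refine Functor.hext (fun n => congrArg (fun t => t.2.1) (h n)) fun m n f => ?_
    have := KG.epi (x.seg m).2.2
    exact heq_of_eq <| eq_of_comp_eq (h m) <| by
      rw [x.seg_comp, y.seg_comp, h n]
  cases x
  cases y
  cases hP
  rfl

noncomputable def ofSegments (s : (Fin k → ℕ) → TotalHom C) (hdeg : ∀ n, KG.deg (s n).2.2 = n)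
    (hs : ∀ m n, m ≤ n → (s m).IsPrefix (s n)) : InfPath KG where
  P :=
    { obj n := (s n).2.1
      map {m n} f := (hs m n (leOfHom f)).hom
      map_id n := by
        have := KG.epi (s n).2.2
        exact ((hs n n le_rfl).eq_hom (comp_id _)).symm
      map_comp {m n q} f g := by
        have := KG.epi (s m).2.2
        refine ((hs m q (leOfHom (f ≫ g))).eq_hom ?_).symm
        rw [comp_comp_of_comp_eq (hs m n (leOfHom f)).comp_hom, (hs n q (leOfHom g)).comp_hom] }
  deg_eq {m n} h := by
    have := congrArg (fun t => KG.deg t.2.2) (hs m n h).comp_hom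
    simp only [comp, KG.deg_comp, hdeg] at this
    exact eq_tsub_of_add_eq (by rw [add_comm, this])

lemma seg_ofSegments (s : (Fin k → ℕ) → TotalHom C) (hdeg : ∀ n, KG.deg (s n).2.2 = n)
    (hs : ∀ m n, m ≤ n → (s m).IsPrefix (s n)) (n : Fin k → ℕ) :
    (ofSegments s hdeg hs).seg n = s n :=
  (comp_eq_of_eq_id (KG.eq_id_of_deg_eq_zero (hdeg 0)) _).symm.trans (hs 0 n zero_le).comp_hom

end InfPath

namespace IsCovering

open TotalHom

variable {k : ℕ} {Γ Λ : Type} [SmallCategory Γ] [SmallCategory Λ]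
  {KGΓ : KGraph k Γ} {KGΛ : KGraph k Λ} {p : Γ ⥤ Λ}

lemma deg_map_totalHom (hc : IsCovering KGΓ KGΛ p) (t : TotalHom Γ) :
    KGΛ.deg (t.map p).2.2 = KGΓ.deg t.2.2 :=
  hc.deg_map t.2.2

lemma exists_lift (hc : IsCovering KGΓ KGΛ p) {v : Γ} {t : TotalHom Λ} (ht : t.1 = p.obj v) :
    ∃ u : TotalHom Γ, u.1 = v ∧ u.map p = t := by
  obtain ⟨a, b, f⟩ := t
  subst ht
  obtain ⟨⟨b', f'⟩, h⟩ := (hc.bij_out v).2 ⟨b, f⟩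
  exact ⟨⟨v, b', f'⟩, rfl, congrArg (Sigma.mk _) h⟩

lemma eq_of_map_eq (hc : IsCovering KGΓ KGΛ p) {t u : TotalHom Γ} (h₁ : t.1 = u.1)
    (h : t.map p = u.map p) : t = u := by
  obtain ⟨a, b, f⟩ := t
  obtain ⟨a', b', f'⟩ := u
  subst h₁
  simp only [TotalHom.map, Sigma.mk.inj_iff, heq_eq_eq, true_and] at h
  exact congrArg (Sigma.mk a) ((hc.bij_out a).1 (Sigma.ext h.1 h.2))

lemma seg_push (hc : IsCovering KGΓ KGΛ p) (x : InfPath KGΓ) (n : Fin k → ℕ) :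
    (InfPath.push hc x).seg n = (x.seg n).map p :=
  rfl

lemma exists_push_eq (hc : IsCovering KGΓ KGΛ p) {v : Γ} {y : InfPath KGΛ}
    (hy : y.P.obj 0 = p.obj v) : ∃ x : InfPath KGΓ, x.P.obj 0 = v ∧ InfPath.push hc x = y := by
  choose s hs_fst hs_map using fun n => hc.exists_lift (t := y.seg n) hy
  have hdeg : ∀ n, KGΓ.deg (s n).2.2 = n := fun n => by
    rw [← hc.deg_map_totalHom, hs_map, y.deg_seg]
  have hs : ∀ m n, m ≤ n → (s m).IsPrefix (s n) := by
    intro m n hmn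
    -- The degree-`m` prefix `w` of `s n` maps onto a degree-`m` prefix of `y.seg n`, which by
    -- unique factorisation is `y.seg m`; so `w` and `s m` are lifts of the same path from `v`.
    obtain ⟨w, hw_deg, hw⟩ := KGΓ.exists_isPrefix (s n) (m := m) (n := n - m) (by
      rw [hdeg, add_tsub_cancel_of_le hmn])
    have hw_map : w.map p = (s m).map p := by
      rw [hs_map m]
      refine KGΛ.isPrefix_unique (hs_map n ▸ hw.map p) (y.isPrefix_seg hmn) ?_
      rw [hc.deg_map_totalHom, hw_deg, y.deg_seg]
    rwa [← hc.eq_of_map_eq (hw.fst_eq.trans ((hs_fst n).trans (hs_fst m).symm)) hw_map]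
  refine ⟨InfPath.ofSegments s hdeg hs, ?_, InfPath.ext_of_seg fun n => ?_⟩
  · exact (congrArg Sigma.fst (InfPath.seg_ofSegments s hdeg hs 0)).trans (hs_fst 0)
  · rw [seg_push, InfPath.seg_ofSegments, hs_map]

end IsCovering

/-- If `p : Γ → Λ` is a covering of `k`-graphs and `v ∈ Γ⁰`, then
`x ↦ p ∘ x` is a bijection from `vΓ^∞` onto `p(v)Λ^∞`: every infinite path of `Λ` with
range `p(v)` lifts uniquely to an infinite path of `Γ` with range `v`. -/
theorem stmt8 {k : ℕ} {Γ Λ : Type} [SmallCategory Γ] [SmallCategory Λ]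
    {KGΓ : KGraph k Γ} {KGΛ : KGraph k Λ} {p : Γ ⥤ Λ}
    (hc : IsCovering KGΓ KGΛ p) (v : Γ) :
    Set.BijOn (InfPath.push hc)
      {x : InfPath KGΓ | x.P.obj 0 = v}
      {y : InfPath KGΛ | y.P.obj 0 = p.obj v} := by
  refine ⟨fun x hx => congrArg p.obj hx, fun x₁ hx₁ x₂ hx₂ h => ?_,
    fun y hy => hc.exists_push_eq hy⟩
  refine InfPath.ext_of_seg fun n => hc.eq_of_map_eq (hx₁.trans hx₂.symm) ?_
  rw [← hc.seg_push, ← hc.seg_push, h]
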